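/- Fix an integer k ≥ 0 and let g_k : [0,∞) → (0,∞) be continuous on [0,∞) and differentiable on (0,∞). Define h_k : [0,∞) → (0,∞) by the finite continued fraction h_k(x) = x + 1/(x + 2/(⋯ + k/g_k(x))); formally, b_k(x) = g_k(x), b_{j-1}(x) = x + j/b_j(x) for j = k, …, 1, and h_k(x) = b_0(x) (with h_0 = g_0). Let Δ_k(x) = φ(x)/h_k(x) − (1 − Φ(x)). Suppose h_k(0) = √(2/π), and suppose there exists x_k > 0 such that for all x > 0 the sign of g_k(x)² − x·g_k(x) − k − g_k'(x) equals the sign of x_k − x. Then Δ_k > 0 on (0,∞) if k is even, and Δ_k < 0 on (0,∞) if k is odd. -/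

import Mathlib

/-!
Write `h = h_k` and `Δ = φ / h - (1 - Φ)`. Since `φ' = -x φ` and `Φ' = φ`,
`Δ' = φ (h² - x h - h') / h²`. Unwinding the continued fraction one level at a time, each
level multiplies the defect `b² - x b - j - b'` by the negative factor `-(j + 1) / b_{j+1}²`, so
`h² - x h - h' = (-1)^k c (g² - x g - k - g')` with `c > 0`. Hence `(-1)^k Δ` increases
strictly on `[0, x_k]` and decreases strictly on `[x_k, ∞)`. It vanishes at `0` because
`h(0) = √(2/π)` and `Φ(0) = 1/2`, and it is bounded below by a function tending to `0` at
infinity (`-(1 - Φ)` for even `k`, `-φ` for odd `k`, where `h > x`), so it is positive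
on `(0, ∞)`.
-/

open MeasureTheory Real

/-- Standard Gaussian density. -/
noncomputable def gaussPdf (x : ℝ) : ℝ := Real.exp (-x ^ 2 / 2) / Real.sqrt (2 * Real.pi)

/-- Standard Gaussian distribution function. -/
noncomputable def gaussCdf (x : ℝ) : ℝ := ∫ t in Set.Iic x, gaussPdf t

/-- Finite continued fraction `hcf k g x = x + 1/(x + 2/(⋯ + k/(g x)))`,
with `hcf 0 g = g`. -/
noncomputable def hcf : ℕ → (ℝ → ℝ) → ℝ → ℝ
  | 0, g => g
  | (k + 1), g => hcf k (fun x => x + ((k : ℝ) + 1) / g x)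

open Set Filter Topology ProbabilityTheory

theorem gaussPdf_eq_gaussianPDFReal : gaussPdf = gaussianPDFReal 0 1 := by
  ext x
  simp [gaussPdf, gaussianPDFReal, div_eq_inv_mul]

theorem gaussPdf_pos (x : ℝ) : 0 < gaussPdf x := by
  rw [gaussPdf_eq_gaussianPDFReal]; exact gaussianPDFReal_pos _ _ _ one_ne_zero

theorem integrable_gaussPdf : Integrable gaussPdf := by
  rw [gaussPdf_eq_gaussianPDFReal]; exact integrable_gaussianPDFReal _ _

theorem integral_gaussPdf : ∫ x, gaussPdf x = 1 := by
  rw [gaussPdf_eq_gaussianPDFReal]; exact integral_gaussianPDFReal_eq_one _ one_ne_zero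

theorem continuous_gaussPdf : Continuous gaussPdf := by
  unfold gaussPdf; fun_prop

theorem hasDerivAt_gaussPdf (x : ℝ) : HasDerivAt gaussPdf (-x * gaussPdf x) x := by
  have h : HasDerivAt (fun y : ℝ => -y ^ 2 / 2) (-x) x :=
    ((hasDerivAt_pow 2 x).neg.div_const 2).congr_deriv (by ring)
  exact (h.exp.div_const _).congr_deriv (by rw [gaussPdf]; ring)

theorem tendsto_gaussPdf_atTop : Tendsto gaussPdf atTop (𝓝 0) := by
  have h : Tendsto (fun y : ℝ => -y ^ 2 / 2) atTop atBot :=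
    (tendsto_neg_atTop_atBot.comp (tendsto_pow_atTop two_ne_zero)).atBot_div_const two_pos
  rw [← zero_div (√(2 * π))]
  exact (tendsto_exp_atBot.comp h).div_const _

theorem hasDerivAt_gaussCdf (x : ℝ) : HasDerivAt gaussCdf (gaussPdf x) x := by
  have hint : ∀ y, gaussCdf y = gaussCdf 0 + ∫ t in (0 : ℝ)..y, gaussPdf t := fun y => by
    rw [← intervalIntegral.integral_Iic_sub_Iic integrable_gaussPdf.integrableOn
      integrable_gaussPdf.integrableOn, gaussCdf, gaussCdf]
    ring
  rw [funext hint]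
  exact (intervalIntegral.integral_hasDerivAt_right (continuous_gaussPdf.intervalIntegrable _ _)
    continuous_gaussPdf.aestronglyMeasurable.stronglyMeasurableAtFilter
    continuous_gaussPdf.continuousAt).const_add _

theorem continuous_gaussCdf : Continuous gaussCdf :=
  continuous_iff_continuousAt.2 fun x => (hasDerivAt_gaussCdf x).continuousAt

theorem gaussCdf_le_one (x : ℝ) : gaussCdf x ≤ 1 :=
  integral_gaussPdf ▸ setIntegral_le_integral integrable_gaussPdf
    (Eventually.of_forall fun t => (gaussPdf_pos t).le)

theorem tendsto_gaussCdf_atTop : Tendsto gaussCdf atTop (𝓝 1) :=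
  integral_gaussPdf ▸ (aecover_Iic tendsto_id).integral_tendsto_of_countably_generated
    integrable_gaussPdf

theorem gaussCdf_zero : gaussCdf 0 = 1 / 2 := by
  have hsymm : gaussCdf 0 = ∫ t in Ioi 0, gaussPdf t := by
    rw [gaussCdf, ← neg_zero, ← integral_comp_neg_Iic]
    simp [gaussPdf]
  have htotal : gaussCdf 0 + ∫ t in Ioi 0, gaussPdf t = 1 :=
    integral_gaussPdf ▸ intervalIntegral.integral_Iic_add_Ioi integrable_gaussPdf.integrableOn
      integrable_gaussPdf.integrableOn
  linarith

theorem gaussPdf_zero_div_sqrt : gaussPdf 0 / √(2 / π) = 1 / 2 := by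
  have h : √(2 * π) * √(2 / π) = 2 := by
    rw [← sqrt_mul (by positivity), show 2 * π * (2 / π) = 2 ^ 2 by field_simp,
      sqrt_sq zero_le_two]
  rw [gaussPdf, show -(0 : ℝ) ^ 2 / 2 = 0 by norm_num, exp_zero, div_div, h]

theorem hcf_pos : ∀ (k : ℕ) {g : ℝ → ℝ} {x : ℝ}, 0 ≤ x → 0 < g x → 0 < hcf k g x
  | 0, _, _, _, hg => hg
  | k + 1, _, _, hx, hg => hcf_pos k hx (add_pos_of_nonneg_of_pos hx (by positivity))

theorem lt_hcf_of_lt :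
    ∀ (k : ℕ) {g : ℝ → ℝ} {x : ℝ}, 0 ≤ x → x < g x → x < hcf k g x
  | 0, _, _, _, hg => hg
  | k + 1, _, _, hx, hg =>
    lt_hcf_of_lt k hx (lt_add_of_pos_right _ (div_pos (by positivity) (hx.trans_lt hg)))

theorem lt_hcf {k : ℕ} {g : ℝ → ℝ} {x : ℝ} (hk : k ≠ 0) (hx : 0 ≤ x) (hg : 0 < g x) :
    x < hcf k g x := by
  obtain ⟨k, rfl⟩ := Nat.exists_eq_succ_of_ne_zero hk
  exact lt_hcf_of_lt k hx (lt_add_of_pos_right _ (div_pos (by positivity) hg))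

theorem continuousOn_hcf : ∀ (k : ℕ) {g : ℝ → ℝ}, ContinuousOn g (Ici 0) →
    (∀ x ≥ 0, 0 < g x) → ContinuousOn (hcf k g) (Ici 0)
  | 0, _, hg, _ => hg
  | k + 1, _, hg, hpos => continuousOn_hcf k
      (continuousOn_id.add (continuousOn_const.div hg fun x hx => (hpos x hx).ne'))
      fun x hx => add_pos_of_nonneg_of_pos hx (div_pos (by positivity) (hpos x hx))

theorem hasDerivAt_hcf :
    ∀ (k : ℕ) {g : ℝ → ℝ} {d x : ℝ}, 0 ≤ x → 0 < g x → HasDerivAt g d x →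
    ∃ D, ∃ c > 0, HasDerivAt (hcf k g) D x ∧
      hcf k g x ^ 2 - x * hcf k g x - D = (-1) ^ k * (c * (g x ^ 2 - x * g x - k - d))
  | 0, _, d, _, _, _, hd => ⟨d, 1, one_pos, hd, by simp [hcf]⟩
  | k + 1, g, d, x, hx, hg, hd => by
    have hG : HasDerivAt (fun y => y + ((k : ℝ) + 1) / g y) (1 - (k + 1) * d / g x ^ 2) x :=
      ((hasDerivAt_id x).add ((hasDerivAt_const x _).div hd hg.ne')).congr_deriv
        (by simp; ring)
    obtain ⟨D, c, hc, hD, hkey⟩ := hasDerivAt_hcf k (g := fun y => y + ((k : ℝ) + 1) / g y) hx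
      (add_pos_of_nonneg_of_pos hx (by positivity)) hG
    refine ⟨D, c * (k + 1) / g x ^ 2, by positivity, hD, ?_⟩
    rw [show hcf (k + 1) g = hcf k _ from rfl, hkey]
    push_cast
    field_simp
    ring

theorem Real.sign_eq_one_iff {r : ℝ} : sign r = 1 ↔ 0 < r := by
  refine ⟨fun h => ?_, sign_of_pos⟩
  rcases lt_trichotomy r 0 with hr | rfl | hr
  · rw [sign_of_neg hr] at h; norm_num at h
  · rw [sign_zero] at h; norm_num at h
  · exact hr

theorem Real.sign_eq_neg_one_iff {r : ℝ} : sign r = -1 ↔ r < 0 := by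
  rw [← neg_eq_iff_eq_neg, ← sign_neg, sign_eq_one_iff, neg_pos]

theorem Real.sign_mul_of_pos {c : ℝ} (hc : 0 < c) (r : ℝ) : sign (c * r) = sign r := by
  rcases lt_trichotomy r 0 with hr | rfl | hr
  · rw [sign_of_neg hr, sign_of_neg (mul_neg_of_pos_of_neg hc hr)]
  · rw [mul_zero]
  · rw [sign_of_pos hr, sign_of_pos (mul_pos hc hr)]

theorem pos_of_hasDerivAt_sign_eq_sign_sub {f u : ℝ → ℝ} {a : ℝ} (ha : 0 < a)
    (hf : ContinuousOn f (Ici 0)) (hf0 : f 0 = 0)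
    (hderiv : ∀ x > 0, ∃ d, HasDerivAt f d x ∧ Real.sign d = Real.sign (a - x))
    (hu : Tendsto u atTop (𝓝 0)) (huf : ∀ᶠ y in atTop, u y ≤ f y) {x : ℝ} (hx : 0 < x) :
    0 < f x := by
  have hsign : ∀ y > 0, Real.sign (deriv f y) = Real.sign (a - y) := fun y hy => by
    obtain ⟨d, hd, hs⟩ := hderiv y hy
    rwa [hd.deriv]
  have hmono : StrictMonoOn f (Icc 0 a) :=
    strictMonoOn_of_deriv_pos (convex_Icc 0 a) (hf.mono Icc_subset_Ici_self) fun y hy => by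
      rw [interior_Icc] at hy
      rw [← sign_eq_one_iff, hsign y hy.1, sign_of_pos (sub_pos.2 hy.2)]
  have hanti : StrictAntiOn f (Ici a) :=
    strictAntiOn_of_deriv_neg (convex_Ici a) (hf.mono (Ici_subset_Ici.2 ha.le)) fun y hy => by
      rw [interior_Ici] at hy
      rw [← sign_eq_neg_one_iff, hsign y (ha.trans hy), sign_of_neg (sub_neg.2 hy)]
  rcases le_or_gt x a with hxa | hax
  · simpa [hf0] using hmono ⟨le_rfl, ha.le⟩ ⟨hx.le, hxa⟩ hx
  -- past `a`, `f x ≤ 0` would keep `f` below `f (x + 1) < 0` for good, yet `u ≤ f`, `u → 0`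
  by_contra! hfx
  have hdrop : f (x + 1) < f x := hanti hax.le (by simp only [mem_Ici]; linarith) (by linarith)
  obtain ⟨y, hyx, hfy, huy⟩ := ((eventually_ge_atTop (x + 1)).and
    (huf.and (hu.eventually (eventually_gt_nhds (by linarith : f (x + 1) < 0))))).exists
  have : f y ≤ f (x + 1) := hanti.antitoneOn (by simp only [mem_Ici]; linarith)
    (by simp only [mem_Ici]; linarith) hyx
  linarith

theorem hasDerivAt_gaussPdf_div_sub {h : ℝ → ℝ} {D x : ℝ} (hh : HasDerivAt h D x)
    (hx : h x ≠ 0) :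
    HasDerivAt (fun y => gaussPdf y / h y - (1 - gaussCdf y))
      (gaussPdf x / h x ^ 2 * (h x ^ 2 - x * h x - D)) x :=
  (((hasDerivAt_gaussPdf x).div hh hx).sub ((hasDerivAt_gaussCdf x).const_sub 1)).congr_deriv
    (by field_simp; ring)

noncomputable def approxError (k : ℕ) (g : ℝ → ℝ) (x : ℝ) : ℝ :=
  gaussPdf x / hcf k g x - (1 - gaussCdf x)

section approxError

variable {k : ℕ} {g : ℝ → ℝ}

theorem approxError_zero (h0 : hcf k g 0 = √(2 / π)) : approxError k g 0 = 0 := by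
  rw [approxError, h0, gaussPdf_zero_div_sqrt, gaussCdf_zero]
  norm_num

theorem continuousOn_approxError (hcont : ContinuousOn g (Ici 0)) (hpos : ∀ x ≥ 0, 0 < g x) :
    ContinuousOn (approxError k g) (Ici 0) :=
  (continuous_gaussPdf.continuousOn.div (continuousOn_hcf k hcont hpos) fun x hx =>
    (hcf_pos k hx (hpos x hx)).ne').sub (continuous_const.sub continuous_gaussCdf).continuousOn

theorem hasDerivAt_approxError {d x : ℝ} (hx : 0 ≤ x) (hg : 0 < g x) (hd : HasDerivAt g d x) :
    ∃ c > 0, HasDerivAt (approxError k g) ((-1) ^ k * (c * (g x ^ 2 - x * g x - k - d))) x := by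
  obtain ⟨D, c, hc, hD, hkey⟩ := hasDerivAt_hcf k hx hg hd
  have hh := hcf_pos k hx hg
  have := gaussPdf_pos x
  refine ⟨gaussPdf x / hcf k g x ^ 2 * c, by positivity, ?_⟩
  exact (hasDerivAt_gaussPdf_div_sub hD hh.ne').congr_deriv (by rw [hkey]; ring)

theorem neg_one_sub_gaussCdf_le_approxError {x : ℝ} (hx : 0 ≤ x) (hg : 0 < g x) :
    -(1 - gaussCdf x) ≤ approxError k g x := by
  have := div_pos (gaussPdf_pos x) (hcf_pos k hx hg)
  rw [approxError]
  linarith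

theorem approxError_le_gaussPdf (hk : k ≠ 0) {x : ℝ} (hx : 1 ≤ x) (hg : 0 < g x) :
    approxError k g x ≤ gaussPdf x := by
  have hh : 1 ≤ hcf k g x := hx.trans (lt_hcf hk (by linarith) hg).le
  have := div_le_self (gaussPdf_pos x).le hh
  rw [approxError]
  linarith [gaussCdf_le_one x]

end approxError

/-- Lemma 2 (criterion): if h_k(0) = √(2/π) and the sign of g² - x·g - k - g'
equals the sign of x_k - x for some x_k > 0, then the approximation error
Δ_k = φ/h_k - (1 - Φ) is positive on (0,∞) for even k and negative for odd k. -/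
theorem criterion_approx_error (k : ℕ) (g g' : ℝ → ℝ)
    (hcont : ContinuousOn g (Set.Ici (0 : ℝ)))
    (hpos : ∀ x ≥ (0 : ℝ), 0 < g x)
    (hderiv : ∀ x > (0 : ℝ), HasDerivAt g (g' x) x)
    (h0 : hcf k g 0 = Real.sqrt (2 / Real.pi))
    (xk : ℝ) (hxk : 0 < xk)
    (hsign : ∀ x > (0 : ℝ),
      Real.sign ((g x) ^ 2 - x * g x - (k : ℝ) - g' x) = Real.sign (xk - x)) :
    (Even k → ∀ x > (0 : ℝ), 0 < gaussPdf x / hcf k g x - (1 - gaussCdf x)) ∧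
    (Odd k → ∀ x > (0 : ℝ), gaussPdf x / hcf k g x - (1 - gaussCdf x) < 0) := by
  have hslope (x : ℝ) (hx : 0 < x) :=
    hasDerivAt_approxError (k := k) hx.le (hpos x hx.le) (hderiv x hx)
  refine ⟨fun hk x hx => ?_, fun hk x hx => ?_⟩
  · refine pos_of_hasDerivAt_sign_eq_sign_sub (u := fun y => -(1 - gaussCdf y)) hxk
      (continuousOn_approxError hcont hpos) (approxError_zero h0) (fun x hx => ?_)
      (by simpa using (tendsto_gaussCdf_atTop.const_sub 1).neg) ?_ hx
    · obtain ⟨c, hc, hd⟩ := hslope x hx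
      rw [hk.neg_one_pow, one_mul] at hd
      exact ⟨_, hd, (sign_mul_of_pos hc _).trans (hsign x hx)⟩
    · filter_upwards [eventually_ge_atTop 0] with y hy
      exact neg_one_sub_gaussCdf_le_approxError hy (hpos y hy)
  · refine neg_pos.1 (pos_of_hasDerivAt_sign_eq_sign_sub (f := fun x => -approxError k g x) hxk
      (continuousOn_approxError hcont hpos).neg (by rw [approxError_zero h0, neg_zero])
      (fun x hx => ?_) (by simpa using tendsto_gaussPdf_atTop.neg) ?_ hx)
    · obtain ⟨c, hc, hd⟩ := hslope x hx
      rw [hk.neg_one_pow, neg_one_mul] at hd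
      exact ⟨_, hd.neg, by rw [neg_neg, sign_mul_of_pos hc, hsign x hx]⟩
    · filter_upwards [eventually_ge_atTop 1] with y hy
      exact neg_le_neg (approxError_le_gaussPdf hk.pos.ne' hy (hpos y (by linarith)))
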